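/- arXiv:1702.00741 — 6 statements merged into one kernel-verified Lean document; each statement's English description precedes it below -/
import Mathlib

section
/- Let γ : [-π, π] → ℂ be a closed curve with γ(t) ≠ 0 for all t, which is piecewise continuously differentiable and winds once around 0 (i.e., (1/(2πi)) ∮_γ z^{j-1} dz = δ_{j,0} for all integers j). Let a : ℤ → ℂ be coefficients such that the Laurent series a(z) = ∑_{k∈ℤ} a_k z^k converges absolutely on the annulus {z : min_t |γ(t)| ≤ |z| ≤ max_t |γ(t)|}. Then for every n ≥ 1 and all vectors u, v ∈ ℂⁿ, ⟨u, T_n(a) v⟩ = (1/(2πi)) ∫_{-π}^{π} a(γ(t)) f_v(γ(t)) conj(f_u(γ*(t))) (γ'(t)/γ(t)) dt, where T_n(a) is the n×n Toeplitz matrix with (i,j)-entry a_{i-j}, f_w(z) = ∑_{k=0}^{n-1} w_k z^k, and γ*(t) = 1/conj(γ(t)). -/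
open MeasureTheory Complex


/-- Lemma (quadratic form via a Jordan-type curve): for a closed, piecewise-C¹ curve
`γ : [-π,π] → ℂ∖{0}` winding once around `0` (in the strong sense that
`(1/(2πi)) ∮_γ z^{j-1} dz = δ_{j,0}` for all `j : ℤ`), and a Laurent series `a` absolutely
convergent on the annulus spanned by `|γ|`, one has
`⟨u, T_n(a) v⟩ = (1/(2πi)) ∫ a(γ(t)) f_v(γ(t)) conj(f_u(γ*(t))) (γ'(t)/γ(t)) dt`. -/
theorem stmt_0 (γ : ℝ → ℂ)
    (hne : ∀ t ∈ Set.Icc (-Real.pi) Real.pi, γ t ≠ 0)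
    (hcont : ContinuousOn γ (Set.Icc (-Real.pi) Real.pi))
    (hclosed : γ (-Real.pi) = γ Real.pi)
    (P : Finset ℝ)
    (hdiff : ∀ t ∈ Set.Icc (-Real.pi) Real.pi \ (P : Set ℝ), DifferentiableAt ℝ γ t)
    (hint : IntervalIntegrable (deriv γ) MeasureTheory.volume (-Real.pi) Real.pi)
    (hwind : ∀ j : ℤ, (1 / (2 * Real.pi * Complex.I)) *
        ∫ t in (-Real.pi)..Real.pi, γ t ^ (j - 1) * deriv γ t =
        if j = 0 then 1 else 0)
    (a : ℤ → ℂ)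
    (hsum : ∀ ρ ∈ Set.Icc
        (sInf ((fun t => ‖γ t‖) '' Set.Icc (-Real.pi) Real.pi))
        (sSup ((fun t => ‖γ t‖) '' Set.Icc (-Real.pi) Real.pi)),
        Summable fun k : ℤ => ‖a k‖ * ρ ^ k)
    (n : ℕ) (hn : 1 ≤ n) (u v : Fin n → ℂ) :
    ∑ i : Fin n, (starRingEnd ℂ) (u i) * ∑ j : Fin n, a ((i : ℤ) - (j : ℤ)) * v j =
      (1 / (2 * Real.pi * Complex.I)) *
      ∫ t in (-Real.pi)..Real.pi,
        (∑' k : ℤ, a k * γ t ^ k) *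
        (∑ j : Fin n, v j * γ t ^ (j : ℕ)) *
        (starRingEnd ℂ) (∑ i : Fin n, u i * (((starRingEnd ℂ) (γ t))⁻¹) ^ (i : ℕ)) *
        (deriv γ t / γ t) := by
  have hpi := Real.pi_pos
  have hle : (-Real.pi) ≤ Real.pi := by linarith
  set I : Set ℝ := Set.Icc (-Real.pi) Real.pi with hIdef
  have hIco : IsCompact I := isCompact_Icc
  have hIne : I.Nonempty := ⟨0, by constructor <;> linarith⟩
  set K : Set ℝ := (fun t => ‖γ t‖) '' I with hKdef
  have hKc : IsCompact K := hIco.image_of_continuousOn (continuous_norm.comp_continuousOn hcont)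
  have hKne : K.Nonempty := hIne.image _
  set m : ℝ := sInf K with hmdef
  set M : ℝ := sSup K with hMdef
  have hmK : m ∈ K := hKc.sInf_mem hKne
  have hMK : M ∈ K := hKc.sSup_mem hKne
  have hm_pos : 0 < m := by
    obtain ⟨t, ht, h⟩ := hmK
    rw [← h]; exact norm_pos_iff.mpr (hne t ht)
  have hmle : ∀ t ∈ I, m ≤ ‖γ t‖ := fun t ht =>
    csInf_le hKc.bddBelow ⟨t, ht, rfl⟩
  have hleM : ∀ t ∈ I, ‖γ t‖ ≤ M := fun t ht =>
    le_csSup hKc.bddAbove ⟨t, ht, rfl⟩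
  have hmM : m ≤ M := by
    obtain ⟨t, ht, h⟩ := hmK
    rw [← h]; exact hleM t ht
  have hM_pos : 0 < M := lt_of_lt_of_le hm_pos hmM
  -- zpow bound
  have hbound : ∀ t ∈ I, ∀ k : ℤ, ‖γ t ^ k‖ ≤ m ^ k + M ^ k := by
    intro t ht k
    rw [norm_zpow]
    have h1 : (0:ℝ) < ‖γ t‖ := norm_pos_iff.mpr (hne t ht)
    rcases le_or_gt 0 k with hk | hk
    · obtain ⟨q, rfl⟩ := Int.eq_ofNat_of_zero_le hk
      have : ‖γ t‖ ^ (q:ℤ) ≤ M ^ (q:ℤ) := by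
        rw [zpow_natCast, zpow_natCast]
        exact pow_le_pow_left₀ (norm_nonneg _) (hleM t ht) q
      have h0 : (0:ℝ) ≤ m ^ (q:ℤ) := le_of_lt (zpow_pos hm_pos _)
      linarith
    · obtain ⟨q, rfl⟩ : ∃ q : ℕ, k = -(q:ℤ) := ⟨k.natAbs, by omega⟩
      have hq : ‖γ t‖ ^ (-(q:ℤ)) ≤ m ^ (-(q:ℤ)) := by
        rw [zpow_neg, zpow_neg, zpow_natCast, zpow_natCast]
        exact inv_anti₀ (pow_pos hm_pos q) (pow_le_pow_left₀ (le_of_lt hm_pos) (hmle t ht) q)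
      have h0 : (0:ℝ) ≤ M ^ (-(q:ℤ)) := le_of_lt (zpow_pos hM_pos _)
      linarith
  have hsum2 : Summable (fun k : ℤ => ‖a k‖ * (m ^ k + M ^ k)) := by
    have h1 := hsum m ⟨le_refl m, hmM⟩
    have h2 := hsum M ⟨hmM, le_refl M⟩
    simpa [mul_add] using h1.add h2
  -- auxiliary continuous factor
  set G : ℝ → ℂ := fun t => (∑ j : Fin n, v j * γ t ^ (j : ℕ)) *
      (starRingEnd ℂ) (∑ i : Fin n, u i * (((starRingEnd ℂ) (γ t))⁻¹) ^ (i : ℕ)) *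
      (γ t)⁻¹ with hGdef
  have hGcont : ContinuousOn G I := by
    apply ContinuousOn.mul
    apply ContinuousOn.mul
    · exact continuousOn_finset_sum _ fun j _ => continuousOn_const.mul (hcont.pow _)
    · apply Complex.continuous_conj.comp_continuousOn
      apply continuousOn_finset_sum _ fun i _ => continuousOn_const.mul (ContinuousOn.pow ?_ _)
      exact (Complex.continuous_conj.comp_continuousOn hcont).inv₀
        (fun t ht => by simpa using hne t ht)
    · exact hcont.inv₀ hne
  obtain ⟨C, hC⟩ := hIco.exists_bound_of_continuousOn hGcont
  have hC0 : 0 ≤ C := le_trans (norm_nonneg _) (hC 0 ⟨by linarith, by linarith⟩)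
  set h : ℤ → ℝ → ℂ := fun k t => a k * γ t ^ k * G t * deriv γ t with hhdef
  have huIcc : Set.uIcc (-Real.pi) Real.pi = I := Set.uIcc_of_le hle
  have hzpowCont : ∀ q : ℤ, ContinuousOn (fun t => γ t ^ q) I :=
    fun q => hcont.zpow₀ q (fun t ht => Or.inl (hne t ht))
  have hIoc : Set.Ioc (-Real.pi) Real.pi ⊆ I := Set.Ioc_subset_Icc_self
  -- integrability of each h k
  have hIntk : ∀ k : ℤ, IntegrableOn (h k) (Set.Ioc (-Real.pi) Real.pi) volume := by
    intro k
    apply (intervalIntegrable_iff_integrableOn_Ioc_of_le hle).mp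
    exact hint.continuousOn_mul (by
      rw [huIcc]
      exact (continuousOn_const.mul (hzpowCont k)).mul hGcont)
  have hDint : IntegrableOn (fun t => ‖deriv γ t‖) (Set.Ioc (-Real.pi) Real.pi) volume :=
    ((intervalIntegrable_iff_integrableOn_Ioc_of_le hle).mp hint).norm
  set D : ℝ := ∫ t in Set.Ioc (-Real.pi) Real.pi, ‖deriv γ t‖ with hDdef
  have hD0 : 0 ≤ D := MeasureTheory.integral_nonneg (fun t => norm_nonneg _)
  -- norm bound on integrals
  have hnb : ∀ k : ℤ, (∫ t in Set.Ioc (-Real.pi) Real.pi, ‖h k t‖) ≤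
      (‖a k‖ * (m ^ k + M ^ k)) * (C * D) := by
    intro k
    have hmono := MeasureTheory.setIntegral_mono_on (hIntk k).norm
      (hDint.const_mul (‖a k‖ * (m ^ k + M ^ k) * C)) measurableSet_Ioc (fun t ht => by
        have ht' : t ∈ I := hIoc ht
        have h1 : ‖h k t‖ = ‖a k‖ * ‖γ t ^ k‖ * ‖G t‖ * ‖deriv γ t‖ := by
          simp [hhdef, norm_mul]
        rw [h1]
        have hb1 : ‖γ t ^ k‖ ≤ m ^ k + M ^ k := hbound t ht' k
        have hb2 : ‖G t‖ ≤ C := hC t ht'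
        have hmk := zpow_pos hm_pos k
        have hMk := zpow_pos hM_pos k
        have : ‖a k‖ * ‖γ t ^ k‖ * ‖G t‖ ≤ ‖a k‖ * (m ^ k + M ^ k) * C := by
          calc ‖a k‖ * ‖γ t ^ k‖ * ‖G t‖
              ≤ ‖a k‖ * (m ^ k + M ^ k) * ‖G t‖ :=
                mul_le_mul_of_nonneg_right
                  (mul_le_mul_of_nonneg_left hb1 (norm_nonneg _)) (norm_nonneg _)
            _ ≤ ‖a k‖ * (m ^ k + M ^ k) * C :=
                mul_le_mul_of_nonneg_left hb2
                  (mul_nonneg (norm_nonneg _) (by linarith))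
        exact mul_le_mul_of_nonneg_right this (norm_nonneg _))
    calc (∫ t in Set.Ioc (-Real.pi) Real.pi, ‖h k t‖)
        ≤ ∫ t in Set.Ioc (-Real.pi) Real.pi, (‖a k‖ * (m ^ k + M ^ k) * C) * ‖deriv γ t‖ := hmono
      _ = (‖a k‖ * (m ^ k + M ^ k)) * (C * D) := by
          rw [MeasureTheory.integral_const_mul]; ring
  have hSum3 : Summable (fun k : ℤ => ∫ t in Set.Ioc (-Real.pi) Real.pi, ‖h k t‖) := by
    apply Summable.of_nonneg_of_le
      (fun k => MeasureTheory.integral_nonneg (fun t => norm_nonneg _)) hnb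
    exact hsum2.mul_right (C * D)
  have hswap : ∑' k : ℤ, (∫ t in Set.Ioc (-Real.pi) Real.pi, h k t) =
      ∫ t in Set.Ioc (-Real.pi) Real.pi, ∑' k : ℤ, h k t :=
    MeasureTheory.integral_tsum_of_summable_integral_norm (fun k => hIntk k) hSum3
  -- pointwise identity between the integrand and the tsum of h
  have hpt : ∀ t : ℝ,
      (∑' k : ℤ, a k * γ t ^ k) *
        (∑ j : Fin n, v j * γ t ^ (j : ℕ)) *
        (starRingEnd ℂ) (∑ i : Fin n, u i * (((starRingEnd ℂ) (γ t))⁻¹) ^ (i : ℕ)) *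
        (deriv γ t / γ t) = ∑' k : ℤ, h k t := by
    intro t
    have e : (fun k : ℤ => h k t) = fun k : ℤ => (a k * γ t ^ k) * (G t * deriv γ t) := by
      funext k; simp only [hhdef, hGdef]; ring
    rw [e, tsum_mul_right]
    simp only [hGdef, div_eq_mul_inv]
    ring
  have h2pi : (2 * (Real.pi : ℂ) * Complex.I) ≠ 0 :=
    mul_ne_zero (mul_ne_zero two_ne_zero (by exact_mod_cast Real.pi_ne_zero)) Complex.I_ne_zero
  -- winding integral over Ioc
  have hwI : ∀ q : ℤ, (∫ t in Set.Ioc (-Real.pi) Real.pi, γ t ^ (q - 1) * deriv γ t) =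
      (2 * (Real.pi : ℂ) * Complex.I) * (if q = 0 then 1 else 0) := by
    intro q
    have hw := hwind q
    rw [intervalIntegral.integral_of_le hle] at hw
    rw [← hw]
    field_simp
  -- integrability of power × derivative
  have hIq : ∀ q : ℤ, IntegrableOn (fun t => γ t ^ q * deriv γ t)
      (Set.Ioc (-Real.pi) Real.pi) volume := by
    intro q
    apply (intervalIntegrable_iff_integrableOn_Ioc_of_le hle).mp
    exact hint.continuousOn_mul (by rw [huIcc]; exact hzpowCont q)
  -- expansion of h k on the interval
  have hexp : ∀ (k : ℤ), ∀ t ∈ Set.Ioc (-Real.pi) Real.pi,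
      h k t = ∑ i : Fin n, ∑ j : Fin n,
        ((starRingEnd ℂ) (u i) * v j) *
          (a k * (γ t ^ (k + (j : ℤ) - (i : ℤ) - 1) * deriv γ t)) := by
    intro k t ht
    have hγ : γ t ≠ 0 := hne t (hIoc ht)
    have hcγ : (starRingEnd ℂ) (γ t) ≠ 0 := by simpa using hγ
    simp only [hhdef, hGdef, map_sum, map_mul, map_pow, map_inv₀, Complex.conj_conj]
    simp only [Finset.sum_mul, Finset.mul_sum]
    refine Finset.sum_congr rfl fun i _ => Finset.sum_congr rfl fun j _ => ?_
    have e1 : γ t ^ (k + (j : ℤ) - (i : ℤ) - 1)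
        = γ t ^ k * γ t ^ (j : ℕ) * ((γ t)⁻¹) ^ (i : ℕ) * (γ t)⁻¹ := by
      rw [inv_pow, ← zpow_natCast (γ t) (i : ℕ), ← zpow_neg, ← zpow_natCast (γ t) (j : ℕ),
        ← zpow_neg_one, ← zpow_add₀ hγ, ← zpow_add₀ hγ, ← zpow_add₀ hγ]
      congr 1
    rw [e1]; ring
  set c : ℂ := 2 * (Real.pi : ℂ) * Complex.I with hcdef
  have hIterm : ∀ (k : ℤ) (i j : Fin n), IntegrableOn (fun t =>
      ((starRingEnd ℂ) (u i) * v j) * (a k * (γ t ^ (k + (j : ℤ) - (i : ℤ) - 1) * deriv γ t)))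
      (Set.Ioc (-Real.pi) Real.pi) volume :=
    fun k i j => ((hIq _).const_mul (a k)).const_mul _
  have hval : ∀ k : ℤ, (∫ t in Set.Ioc (-Real.pi) Real.pi, h k t) =
      ∑ i : Fin n, ∑ j : Fin n, ((starRingEnd ℂ) (u i) * v j) *
        (a k * (c * (if k + (j : ℤ) - (i : ℤ) = 0 then 1 else 0))) := by
    intro k
    rw [MeasureTheory.setIntegral_congr_fun measurableSet_Ioc (hexp k)]
    rw [MeasureTheory.integral_finset_sum _
      (fun i _ => MeasureTheory.integrable_finset_sum _ (fun j _ => hIterm k i j))]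
    refine Finset.sum_congr rfl fun i _ => ?_
    rw [MeasureTheory.integral_finset_sum _ (fun j _ => hIterm k i j)]
    refine Finset.sum_congr rfl fun j _ => ?_
    rw [MeasureTheory.integral_const_mul, MeasureTheory.integral_const_mul,
      hwI (k + (j : ℤ) - (i : ℤ))]
  have hterm_eq : ∀ i j : Fin n, (fun k : ℤ => ((starRingEnd ℂ) (u i) * v j) *
        (a k * (c * (if k + (j : ℤ) - (i : ℤ) = 0 then 1 else 0)))) =
      fun k : ℤ => if k = (i : ℤ) - (j : ℤ) then
        ((starRingEnd ℂ) (u i) * v j) * (a ((i : ℤ) - (j : ℤ)) * c) else 0 := by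
    intro i j; funext k
    by_cases hk : k = (i : ℤ) - (j : ℤ)
    · subst hk
      simp [show (i : ℤ) - (j : ℤ) + (j : ℤ) - (i : ℤ) = 0 by ring]
    · have hk' : ¬ (k + (j : ℤ) - (i : ℤ) = 0) := by omega
      simp [hk, hk']
  have hsummable : ∀ i j : Fin n, Summable (fun k : ℤ => ((starRingEnd ℂ) (u i) * v j) *
      (a k * (c * (if k + (j : ℤ) - (i : ℤ) = 0 then 1 else 0)))) := by
    intro i j
    rw [hterm_eq i j]
    exact ⟨_, hasSum_ite_eq _ _⟩
  have htsum : (∑' k : ℤ, ∫ t in Set.Ioc (-Real.pi) Real.pi, h k t) =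
      ∑ i : Fin n, ∑ j : Fin n, ((starRingEnd ℂ) (u i) * v j) *
        (a ((i : ℤ) - (j : ℤ)) * c) := by
    rw [tsum_congr hval,
      Summable.tsum_finsetSum (fun i _ => summable_sum (fun j _ => hsummable i j))]
    refine Finset.sum_congr rfl fun i _ => ?_
    rw [Summable.tsum_finsetSum (fun j _ => hsummable i j)]
    refine Finset.sum_congr rfl fun j _ => ?_
    rw [hterm_eq i j, tsum_ite_eq]
  -- final assembly
  rw [intervalIntegral.integral_of_le hle]
  have hbig : (∫ t in Set.Ioc (-Real.pi) Real.pi,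
      (∑' k : ℤ, a k * γ t ^ k) *
        (∑ j : Fin n, v j * γ t ^ (j : ℕ)) *
        (starRingEnd ℂ) (∑ i : Fin n, u i * (((starRingEnd ℂ) (γ t))⁻¹) ^ (i : ℕ)) *
        (deriv γ t / γ t)) =
      ∑ i : Fin n, ∑ j : Fin n, ((starRingEnd ℂ) (u i) * v j) *
        (a ((i : ℤ) - (j : ℤ)) * c) := by
    simp only [hpt]
    rw [← hswap, htsum]
  rw [hbig, Finset.mul_sum]
  refine Finset.sum_congr rfl fun i _ => ?_
  rw [Finset.mul_sum, Finset.mul_sum]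
  refine Finset.sum_congr rfl fun j _ => ?_
  rw [hcdef]
  field_simp
end

section
/- Let h : ℕ → ℂ be given by h_{2k} = C(2k,k) (central binomial coefficient) and h_{2k+1} = 0. Let H_n be the n×n Hankel matrix with (i,j)-entry h_{i+j-2} for 1 ≤ i,j ≤ n. Then det H_n = 2^{n-1} for all n ≥ 1. -/
open Finset Matrix

section aux

lemma choose_symm_center (n k j : ℕ) (h : k + j = n) : n.choose k = n.choose j := by
  have : k = n - j := by omega
  rw [this, Nat.choose_symm (by omega)]

lemma vand_even (a b : ℕ) (hab : a ≤ b) :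
    (2*a+2*b).choose (a+b) = (2*a).choose a * (2*b).choose b
      + 2 * ∑ c ∈ range a, (2*a).choose (a - (c+1)) * (2*b).choose (b - (c+1)) := by
  rw [Nat.add_choose_eq, Finset.Nat.sum_antidiagonal_eq_sum_range_succ_mk]
  have h1 : a + b + 1 = a + (b + 1) := by omega
  simp only [Nat.succ_eq_add_one]
  rw [h1, Finset.sum_range_add]
  have e1 : ∑ p ∈ range a, (2*a).choose p * (2*b).choose (a + b - p)
      = ∑ c ∈ range a, (2*a).choose (a - (c+1)) * (2*b).choose (b - (c+1)) := by
    rw [← Finset.sum_range_reflect]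
    apply Finset.sum_congr rfl
    intro c hc
    simp only [mem_range] at hc
    have h2 : a - 1 - c = a - (c+1) := by omega
    have h3 : a + b - (a - (c+1)) = b + (c+1) := by omega
    rw [h2, h3]
    congr 1
    exact (choose_symm_center (2*b) (b+(c+1)) (b-(c+1)) (by omega))
  have e2 : ∑ c ∈ range (b+1), (2*a).choose (a + c) * (2*b).choose (a + b - (a + c))
      = (2*a).choose a * (2*b).choose b
        + ∑ c ∈ range a, (2*a).choose (a - (c+1)) * (2*b).choose (b - (c+1)) := by
    rw [Finset.sum_range_succ']
    have e3 : ∑ c ∈ range b, (2*a).choose (a + (c+1)) * (2*b).choose (a + b - (a + (c+1)))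
        = ∑ c ∈ range a, (2*a).choose (a - (c+1)) * (2*b).choose (b - (c+1)) := by
      rw [← Finset.sum_subset (Finset.range_subset_range.mpr hab)]
      · apply Finset.sum_congr rfl
        intro c hc
        simp only [mem_range] at hc
        have h4 : a + b - (a + (c+1)) = b - (c+1) := by omega
        rw [h4]
        congr 1
        exact (choose_symm_center (2*a) (a+(c+1)) (a-(c+1)) (by omega))
      · intro c _ hc
        simp only [mem_range, not_lt] at hc
        have : (2*a).choose (a + (c+1)) = 0 := Nat.choose_eq_zero_of_lt (by omega)
        rw [this, zero_mul]
    rw [e3]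
    simp
    ring
  rw [e1, e2]
  ring

lemma vand_odd (a b : ℕ) (hab : a ≤ b) :
    (2*a+2*b+2).choose (a+b+1)
      = 2 * ∑ c ∈ range (a+1), (2*a+1).choose (a-c) * (2*b+1).choose (b-c) := by
  have h0 : 2*a+2*b+2 = (2*a+1) + (2*b+1) := by omega
  rw [h0, Nat.add_choose_eq, Finset.Nat.sum_antidiagonal_eq_sum_range_succ_mk]
  have h1 : a + b + 1 + 1 = (a+1) + (b + 1) := by omega
  simp only [Nat.succ_eq_add_one]
  rw [h1, Finset.sum_range_add]
  have e1 : ∑ p ∈ range (a+1), (2*a+1).choose p * (2*b+1).choose (a + b + 1 - p)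
      = ∑ c ∈ range (a+1), (2*a+1).choose (a-c) * (2*b+1).choose (b-c) := by
    rw [← Finset.sum_range_reflect]
    apply Finset.sum_congr rfl
    intro c hc
    simp only [mem_range] at hc
    have h2 : a + 1 - 1 - c = a - c := by omega
    have h3 : a + b + 1 - (a - c) = b + 1 + c := by omega
    rw [h2, h3]
    congr 1
    exact (choose_symm_center (2*b+1) (b+1+c) (b-c) (by omega))
  have e2 : ∑ c ∈ range (b+1), (2*a+1).choose (a+1+c) * (2*b+1).choose (a + b + 1 - (a+1+c))
      = ∑ c ∈ range (a+1), (2*a+1).choose (a-c) * (2*b+1).choose (b-c) := by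
    rw [← Finset.sum_subset (Finset.range_subset_range.mpr (by omega : a+1 ≤ b+1))]
    · apply Finset.sum_congr rfl
      intro c hc
      simp only [mem_range] at hc
      have h4 : a + b + 1 - (a+1+c) = b - c := by omega
      rw [h4]
      congr 1
      exact choose_symm_center (2*a+1) (a+1+c) (a-c) (by omega)
    · intro c _ hc
      simp only [mem_range, not_lt] at hc
      have : (2*a+1).choose (a+1+c) = 0 := Nat.choose_eq_zero_of_lt (by omega)
      rw [this, zero_mul]
  rw [e1, e2]
  ring

lemma natsum_even (a b : ℕ) (hba : b ≤ a) :
    ∑ c ∈ range (b+1), (if c = 0 then 1 else 2) * ((2*a).choose (a-c)) * ((2*b).choose (b-c))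
      = (2*(a+b)).choose (a+b) := by
  rw [Finset.sum_range_succ']
  have hc : ∀ c ∈ range b,
      (if c+1 = 0 then 1 else 2) * ((2*a).choose (a-(c+1))) * ((2*b).choose (b-(c+1)))
        = 2 * ((2*b).choose (b-(c+1)) * (2*a).choose (a-(c+1))) := by
    intro c _
    simp only [Nat.succ_ne_zero, if_false]
    ring
  rw [Finset.sum_congr rfl hc, ← Finset.mul_sum]
  have h2 : 2*(a+b) = 2*b + 2*a := by ring
  have h3 : a+b = b+a := by ring
  rw [h2, h3, vand_even b a hba]
  simp only [if_true, Nat.sub_zero, eq_self_iff_true]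
  ring

lemma natsum_odd (a b : ℕ) (hba : b ≤ a) :
    ∑ c ∈ range (b+1), 2 * ((2*a+1).choose (a-c)) * ((2*b+1).choose (b-c))
      = (2*(a+b+1)).choose (a+b+1) := by
  have h2 : 2*(a+b+1) = 2*b + 2*a + 2 := by ring
  have h3 : a+b+1 = b+a+1 := by ring
  rw [h2, h3, vand_odd b a hba, Finset.mul_sum]
  exact Finset.sum_congr rfl fun c _ => by ring

noncomputable def Lent (i k : ℕ) : ℂ :=
  if k ≤ i ∧ (i + k) % 2 = 0 then ((i.choose ((i - k)/2) : ℕ) : ℂ) else 0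

noncomputable def dent (k : ℕ) : ℂ := if k = 0 then 1 else 2

lemma sum_range_two_mul (f : ℕ → ℂ) (m : ℕ) :
    ∑ k ∈ range (2*m), f k = ∑ c ∈ range m, (f (2*c) + f (2*c+1)) := by
  induction m with
  | zero => simp
  | succ m ih =>
      have h : 2*(m+1) = 2*m + 1 + 1 := by omega
      rw [h, Finset.sum_range_succ, Finset.sum_range_succ, ih, Finset.sum_range_succ]
      ring

lemma trunc_sum (g : ℕ → ℂ) (j M N : ℕ) (hM : j < M) (hN : j < N)
    (hg : ∀ k, j < k → g k = 0) :
    ∑ k ∈ range M, g k = ∑ k ∈ range N, g k := by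
  have h1 : ∀ P, j < P → ∑ k ∈ range P, g k = ∑ k ∈ range (j+1), g k := by
    intro P hP
    rw [← Finset.sum_subset (Finset.range_subset_range.mpr (by omega : j+1 ≤ P))]
    intro k hk hk'
    simp only [mem_range, not_lt] at hk hk'
    exact hg k (by omega)
  rw [h1 M hM, h1 N hN]

lemma Lzero_par (p q : ℕ) (hpq : (p + q) % 2 = 1) : Lent p q = 0 := by
  rw [Lent, if_neg]
  intro hc
  omega

lemma Lval (p c : ℕ) (hc : 2*c ≤ p) (hpar : (p + 2*c) % 2 = 0) :
    Lent p (2*c) = ((p.choose ((p - 2*c)/2) : ℕ) : ℂ) := by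
  rw [Lent, if_pos ⟨by omega, hpar⟩]

lemma key (h : ℕ → ℂ) (he : ∀ k : ℕ, h (2 * k) = (Nat.choose (2 * k) k : ℂ))
    (ho : ∀ k : ℕ, h (2 * k + 1) = 0)
    (n i j : ℕ) (hi : i < n) (hj : j ≤ i) :
    ∑ k ∈ range n, Lent i k * dent k * Lent j k = h (i + j) := by
  have gz : ∀ k, j < k → Lent i k * dent k * Lent j k = 0 := by
    intro k hk
    have hz : Lent j k = 0 := by
      rw [Lent, if_neg]
      intro hc
      omega
    rw [hz, mul_zero]
  rcases Nat.even_or_odd i with ⟨a, ha⟩ | ⟨a, ha⟩ <;>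
    rcases Nat.even_or_odd j with ⟨b, hb⟩ | ⟨b, hb⟩
  · -- i = a + a, j = b + b
    have hba : b ≤ a := by omega
    rw [trunc_sum _ j n (2*(b+1)) (by omega) (by omega) gz, sum_range_two_mul]
    have hsum : ∀ c ∈ range (b+1),
        (Lent i (2*c) * dent (2*c) * Lent j (2*c)
          + Lent i (2*c+1) * dent (2*c+1) * Lent j (2*c+1))
        = (((if c = 0 then 1 else 2) * (2*a).choose (a - c) * (2*b).choose (b - c) : ℕ) : ℂ) := by
      intro c hcm
      simp only [mem_range] at hcm
      have h1 : Lent i (2*c+1) = 0 := Lzero_par _ _ (by omega)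
      have h2 : Lent i (2*c) = (((2*a).choose (a-c) : ℕ) : ℂ) := by
        rw [Lval i c (by omega) (by omega)]
        norm_cast
        congr 1 <;> omega
      have h3 : Lent j (2*c) = (((2*b).choose (b-c) : ℕ) : ℂ) := by
        rw [Lval j c (by omega) (by omega)]
        norm_cast
        congr 1 <;> omega
      have h4 : dent (2*c) = (((if c = 0 then 1 else 2) : ℕ) : ℂ) := by
        rcases c with _ | c <;> simp [dent]
      rw [h1, h2, h3, h4]
      push_cast
      ring
    rw [Finset.sum_congr rfl hsum, ← Nat.cast_sum, natsum_even a b hba]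
    have hij : i + j = 2*(a+b) := by omega
    rw [hij, he]
  · -- i = a + a, j = 2*b+1 : mixed
    have hz : ∀ k ∈ range n, Lent i k * dent k * Lent j k = 0 := by
      intro k _
      rcases Nat.even_or_odd k with ⟨c, hc⟩ | ⟨c, hc⟩
      · have : Lent j k = 0 := Lzero_par _ _ (by omega)
        rw [this, mul_zero]
      · have : Lent i k = 0 := Lzero_par _ _ (by omega)
        rw [this, zero_mul, zero_mul]
    rw [Finset.sum_eq_zero hz]
    have hij : i + j = 2*(a+b) + 1 := by omega
    rw [hij, ho]
  · -- i = 2*a+1, j = b + b : mixed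
    have hz : ∀ k ∈ range n, Lent i k * dent k * Lent j k = 0 := by
      intro k _
      rcases Nat.even_or_odd k with ⟨c, hc⟩ | ⟨c, hc⟩
      · have : Lent i k = 0 := Lzero_par _ _ (by omega)
        rw [this, zero_mul, zero_mul]
      · have : Lent j k = 0 := Lzero_par _ _ (by omega)
        rw [this, mul_zero]
    rw [Finset.sum_eq_zero hz]
    have hij : i + j = 2*(a+b) + 1 := by omega
    rw [hij, ho]
  · -- i = 2*a+1, j = 2*b+1
    have hba : b ≤ a := by omega
    rw [trunc_sum _ j n (2*(b+1)) (by omega) (by omega) gz, sum_range_two_mul]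
    have hsum : ∀ c ∈ range (b+1),
        (Lent i (2*c) * dent (2*c) * Lent j (2*c)
          + Lent i (2*c+1) * dent (2*c+1) * Lent j (2*c+1))
        = ((2 * (2*a+1).choose (a - c) * (2*b+1).choose (b - c) : ℕ) : ℂ) := by
      intro c hcm
      simp only [mem_range] at hcm
      have h1 : Lent i (2*c) = 0 := Lzero_par _ _ (by omega)
      have h2 : Lent i (2*c+1) = (((2*a+1).choose (a-c) : ℕ) : ℂ) := by
        rw [Lent, if_pos ⟨by omega, by omega⟩]
        norm_cast
        congr 1 <;> omega
      have h3 : Lent j (2*c+1) = (((2*b+1).choose (b-c) : ℕ) : ℂ) := by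
        rw [Lent, if_pos ⟨by omega, by omega⟩]
        norm_cast
        congr 1 <;> omega
      have h4 : dent (2*c+1) = 2 := by simp [dent]
      rw [h1, h2, h3, h4]
      push_cast
      ring
    rw [Finset.sum_congr rfl hsum, ← Nat.cast_sum, natsum_odd a b hba]
    have hij : i + j = 2*(a+b+1) := by omega
    rw [hij, he]

end aux

/-- Hankel determinant of the sequence `h_{2k} = C(2k,k)`, `h_{odd} = 0`:
`det H_n = 2^{n-1}`. -/
theorem stmt_7 (h : ℕ → ℂ)
    (he : ∀ k : ℕ, h (2 * k) = (Nat.choose (2 * k) k : ℂ))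
    (ho : ∀ k : ℕ, h (2 * k + 1) = 0)
    (n : ℕ) (hn : 1 ≤ n) :
    (Matrix.of fun i j : Fin n => h ((i : ℕ) + (j : ℕ))).det = 2 ^ (n - 1) := by
  classical
  set Lm : Matrix (Fin n) (Fin n) ℂ := Matrix.of fun i k : Fin n => Lent i k with hLm
  set Dm : Matrix (Fin n) (Fin n) ℂ :=
    Matrix.diagonal (fun k : Fin n => dent k) with hDm
  have hmat : (Matrix.of fun i j : Fin n => h ((i : ℕ) + (j : ℕ))) = Lm * Dm * Lmᵀ := by
    ext i j
    have step : (Lm * Dm * Lmᵀ) i j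
        = ∑ k ∈ range n, Lent i k * dent k * Lent j k := by
      rw [Matrix.mul_apply]
      rw [← Fin.sum_univ_eq_sum_range (fun k => Lent i k * dent k * Lent j k) n]
      apply Finset.sum_congr rfl
      intro k _
      rw [hLm, hDm, Matrix.mul_diagonal]
      simp [Matrix.transpose_apply]
    show h ((i : ℕ) + (j : ℕ)) = (Lm * Dm * Lmᵀ) i j
    rw [step]
    rcases le_total (j : ℕ) (i : ℕ) with hle | hle
    · exact (key h he ho n i j i.isLt hle).symm
    · have := key h he ho n j i j.isLt hle
      rw [Nat.add_comm (i : ℕ) (j : ℕ), ← this]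
      apply Finset.sum_congr rfl
      intro k _
      ring
  rw [hmat, Matrix.det_mul, Matrix.det_mul, Matrix.det_transpose]
  have hdetL : Lm.det = 1 := by
    rw [Matrix.det_of_lowerTriangular Lm (by
      intro i j hij
      rw [hLm]
      show Lent i j = 0
      rw [Lent, if_neg]
      intro hc
      exact absurd hc.1 (by simpa using hij))]
    have hdiag : ∀ i : Fin n, Lm i i = 1 := by
      intro i
      show Lent i i = 1
      rw [Lent, if_pos ⟨le_rfl, by omega⟩]
      simp
    simp [hdiag]
  have hdetD : Dm.det = 2 ^ (n - 1) := by
    rw [hDm, Matrix.det_diagonal]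
    obtain ⟨m, rfl⟩ : ∃ m, n = m + 1 := ⟨n - 1, by omega⟩
    rw [Fin.prod_univ_succ]
    have h0 : dent ((0 : Fin (m+1)) : ℕ) = 1 := by simp [dent]
    have hs : ∀ i : Fin m, dent ((i.succ : Fin (m+1)) : ℕ) = 2 := by
      intro i
      simp [dent, Fin.val_succ]
    rw [h0, one_mul]
    simp only [hs, Finset.prod_const, Finset.card_univ, Fintype.card_fin]
    simp
  rw [hdetL, hdetD]
  ring
end

section
/- Let h : ℕ → ℂ be given by h_{2k} = C(2k,k) a^{2k} for some a ∈ ℂ and h_{2k+1} = 0. Let H_n be the n×n Hankel matrix with entries h_{i+j-2}. Then det H_n = 2^{n-1} a^{n(n-1)}. -/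
open Polynomial LaurentPolynomial Finset

noncomputable section

abbrev RR := LaurentPolynomial ℂ

def ww : RR := T 1 + T (-1)

def gg (m : ℕ) : ℂ := (ww ^ m).coeff 0

lemma CT_apply (c : ℂ) (d m : ℤ) :
    ((LaurentPolynomial.C c * T d : RR)).coeff m = if d = m then c else 0 := by
  rw [← single_eq_C_mul_T, AddMonoidAlgebra.coeff_single]; exact Finsupp.single_apply

lemma ww_pow (m : ℕ) : ww ^ m =
    ∑ j ∈ range (m + 1), LaurentPolynomial.C ((m.choose j : ℂ)) * T (2 * (j:ℤ) - m) := by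
  rw [ww, add_pow]
  refine Finset.sum_congr rfl fun j hj => ?_
  rw [mem_range, Nat.lt_succ_iff] at hj
  rw [T_pow, T_pow, ← T_add, ← map_natCast (LaurentPolynomial.C (R := ℂ)), mul_comm]
  congr 1
  push_cast [hj]
  ring

lemma gg_even (k : ℕ) : gg (2 * k) = ((2 * k).choose k : ℂ) := by
  rw [gg, ww_pow, AddMonoidAlgebra.coeff_sum, Finset.sum_apply' 0]
  rw [Finset.sum_eq_single k]
  · rw [CT_apply, if_pos (by push_cast; ring)]
  · intro j hj hjk
    rw [CT_apply, if_neg (by push_cast; omega)]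
  · intro h; exact absurd (mem_range.mpr (by omega)) h

lemma gg_odd (k : ℕ) : gg (2 * k + 1) = 0 := by
  rw [gg, ww_pow, AddMonoidAlgebra.coeff_sum, Finset.sum_apply' 0]
  refine Finset.sum_eq_zero fun j hj => ?_
  rw [CT_apply, if_neg (by push_cast; omega)]

def pp (i : ℕ) : Polynomial ℂ := if i = 0 then 1 else dickson 1 1 i

lemma dickson_two' : dickson 1 (1:ℂ) 2 = X ^ 2 - Polynomial.C 2 := by
  rw [dickson_two]
  simp [map_ofNat]
  ring

lemma dickson_monic : ∀ i : ℕ,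
    (dickson 1 (1:ℂ) (i+1)).Monic ∧ (dickson 1 (1:ℂ) (i+1)).natDegree = i+1
  | 0 => by simp [monic_X]
  | 1 => by
      rw [dickson_two']
      exact ⟨monic_X_pow_sub_C _ (by omega), by compute_degree!⟩
  | (i+2) => by
      obtain ⟨h1, h2⟩ := dickson_monic (i+1)
      obtain ⟨h3, h4⟩ := dickson_monic i
      have hm : (X * dickson 1 (1:ℂ) (i+2)).Monic := monic_X.mul h1
      have hd : (X * dickson 1 (1:ℂ) (i+2)).natDegree = i + 3 := by
        rw [natDegree_X_mul h1.ne_zero, h2]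
      have hdeglt : (Polynomial.C (1:ℂ) * dickson 1 1 (i+1)).degree
          < (X * dickson 1 (1:ℂ) (i+2)).degree := by
        rw [Polynomial.C_1, one_mul, degree_eq_natDegree hm.ne_zero, hd,
          degree_eq_natDegree h3.ne_zero, h4]
        exact_mod_cast by omega
      constructor
      · rw [dickson_add_two, sub_eq_add_neg]
        apply hm.add_of_left
        rwa [degree_neg]
      · rw [dickson_add_two, ← hd]
        apply natDegree_sub_eq_left_of_natDegree_lt
        have h5 : (Polynomial.C (1:ℂ) * dickson 1 1 (i+1)).natDegree = i + 1 := by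
          rw [Polynomial.C_1, one_mul, h4]
        rw [h5, hd]
        omega

lemma pp_monic (i : ℕ) : (pp i).Monic ∧ (pp i).natDegree = i := by
  rcases i with _ | i
  · simp [pp, monic_one]
  · simpa [pp] using dickson_monic i

lemma pp_aeval (i : ℕ) : aeval ww (pp i) = if i = 0 then 1 else T i + T (-(i:ℤ)) := by
  rcases i with _ | i
  · simp [pp]
  · have h := dickson_one_one_eval_add_inv (T 1 : RR) (T (-1))
      (by rw [← T_add]; norm_num) (i+1)
    rw [pp, if_neg (Nat.succ_ne_zero i), if_neg (Nat.succ_ne_zero i), aeval_def,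
      eval₂_eq_eval_map, map_dickson, map_one, ww, h, T_pow, T_pow]
    congr 1 <;> · congr 1; push_cast; ring

lemma one_apply_zero : (1 : RR).coeff 0 = 1 := by
  rw [← single_zero_one_eq_one, AddMonoidAlgebra.coeff_single]; exact Finsupp.single_eq_same

lemma key_s8 (n : ℕ) (i j : Fin n) :
    (aeval ww (pp i) * aeval ww (pp j)).coeff 0
      = if i = j then (if (i:ℕ) = 0 then 1 else 2) else 0 := by
  rw [pp_aeval, pp_aeval]
  by_cases hi : (i:ℕ) = 0 <;> by_cases hj : (j:ℕ) = 0
  · have hij : i = j := Fin.ext (by omega)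
    simp [hi, hj, hij, one_apply_zero]
  · have hij : i ≠ j := fun h => hj (h ▸ hi)
    simp only [hi, hj, if_pos, if_neg, if_true, if_false, hij, one_mul]
    rw [AddMonoidAlgebra.coeff_add, Finsupp.add_apply, T_apply, T_apply]
    split_ifs
    all_goals try (exfalso; omega)
    all_goals norm_num
  · have hij : i ≠ j := fun h => hi (h ▸ hj)
    simp only [hi, hj, if_pos, if_neg, if_true, if_false, hij, mul_one]
    rw [AddMonoidAlgebra.coeff_add, Finsupp.add_apply, T_apply, T_apply]
    split_ifs
    all_goals try (exfalso; omega)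
    all_goals norm_num
  · simp only [hi, hj, if_neg, if_false]
    rw [add_mul, mul_add, mul_add, ← T_add, ← T_add, ← T_add, ← T_add]
    rw [AddMonoidAlgebra.coeff_add, AddMonoidAlgebra.coeff_add, AddMonoidAlgebra.coeff_add,
        Finsupp.add_apply, Finsupp.add_apply, Finsupp.add_apply,
      T_apply, T_apply, T_apply, T_apply]
    by_cases hij : i = j
    · have hv : (i:ℕ) = (j:ℕ) := by rw [hij]
      rw [if_pos hij]
      split_ifs
      all_goals try (exfalso; omega)
      all_goals norm_num
    · have hne : (i:ℕ) ≠ (j:ℕ) := fun h => hij (Fin.ext h)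
      rw [if_neg hij]
      split_ifs
      all_goals try (exfalso; omega)
      all_goals norm_num

lemma gg_def (m : ℕ) : gg m = (ww ^ m).coeff 0 := rfl

lemma expand (n : ℕ) (i j : Fin n) :
    (aeval ww (pp i) * aeval ww (pp j)).coeff 0
      = ∑ l : Fin n, (∑ k : Fin n, (pp i).coeff k * gg ((k:ℕ) + (l:ℕ))) * (pp j).coeff l := by
  have hexp : ∀ m : Fin n, aeval ww (pp (m:ℕ)) = ∑ k : Fin n, (pp (m:ℕ)).coeff k • ww ^ (k:ℕ) := by
    intro m
    rw [Polynomial.aeval_eq_sum_range' (n := n) (by rw [(pp_monic (m:ℕ)).2]; exact m.2)]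
    exact (Fin.sum_univ_eq_sum_range (fun k => (pp (m:ℕ)).coeff k • ww ^ k) n).symm
  have h1 : ∀ k l : Fin n, ((pp (i:ℕ)).coeff (k:ℕ) • ww ^ (k:ℕ)
        * ((pp (j:ℕ)).coeff (l:ℕ) • ww ^ (l:ℕ))).coeff 0
      = (pp (i:ℕ)).coeff (k:ℕ) * gg ((k:ℕ) + (l:ℕ)) * (pp (j:ℕ)).coeff (l:ℕ) := by
    intro k l
    rw [show gg ((k:ℕ)+(l:ℕ)) = (ww ^ ((k:ℕ)+(l:ℕ))).coeff 0 from rfl,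
      smul_mul_smul_comm, AddMonoidAlgebra.coeff_smul_apply, ← pow_add, smul_eq_mul]
    ring
  rw [hexp i, hexp j, Finset.sum_mul_sum, AddMonoidAlgebra.coeff_sum, Finset.sum_apply' 0]
  have h2 : ∀ k : Fin n,
      (∑ l : Fin n, (pp (i:ℕ)).coeff (k:ℕ) • ww ^ (k:ℕ)
          * ((pp (j:ℕ)).coeff (l:ℕ) • ww ^ (l:ℕ))).coeff 0
        = ∑ l : Fin n,
            (pp (i:ℕ)).coeff (k:ℕ) * gg ((k:ℕ) + (l:ℕ)) * (pp (j:ℕ)).coeff (l:ℕ) := by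
    intro k
    rw [AddMonoidAlgebra.coeff_sum, Finset.sum_apply' 0]
    exact Finset.sum_congr rfl fun l _ => h1 k l
  rw [Finset.sum_congr rfl fun k _ => h2 k, Finset.sum_comm]
  exact Finset.sum_congr rfl fun l _ => (Finset.sum_mul _ _ _).symm

end

/-- Hankel determinant of `h_{2k} = C(2k,k) a^{2k}`, `h_{odd} = 0`:
`det H_n = 2^{n-1} a^{n(n-1)}`. -/
theorem stmt_8 (a : ℂ) (h : ℕ → ℂ)
    (he : ∀ k : ℕ, h (2 * k) = (Nat.choose (2 * k) k : ℂ) * a ^ (2 * k))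
    (ho : ∀ k : ℕ, h (2 * k + 1) = 0)
    (n : ℕ) (hn : 1 ≤ n) :
    (Matrix.of fun i j : Fin n => h ((i : ℕ) + (j : ℕ))).det
      = 2 ^ (n - 1) * a ^ (n * (n - 1)) := by
  classical
  set A : Matrix (Fin n) (Fin n) ℂ := Matrix.diagonal fun i => a ^ (i:ℕ) with hA
  set G : Matrix (Fin n) (Fin n) ℂ := Matrix.of fun k l : Fin n => gg ((k:ℕ) + (l:ℕ)) with hG
  set M : Matrix (Fin n) (Fin n) ℂ := Matrix.of fun i k : Fin n => (pp (i:ℕ)).coeff (k:ℕ) with hM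
  -- h m = a^m * gg m
  have hg : ∀ m : ℕ, h m = a ^ m * gg m := by
    intro m
    rcases Nat.even_or_odd m with ⟨k, rfl⟩ | ⟨k, rfl⟩
    · have : k + k = 2 * k := by omega
      rw [this, he, gg_even]; ring
    · rw [ho, gg_odd]; ring
  -- H = A * G * A
  have hH : (Matrix.of fun i j : Fin n => h ((i : ℕ) + (j : ℕ))) = A * G * A := by
    ext i j
    simp only [hA, hG, Matrix.mul_diagonal, Matrix.diagonal_mul, Matrix.of_apply]
    rw [hg, pow_add]
    ring
  -- M * G * Mᵀ = D
  have hMGM : M * G * M.transpose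
      = Matrix.diagonal (fun i : Fin n => if (i:ℕ) = 0 then (1:ℂ) else 2) := by
    ext i j
    rw [Matrix.mul_apply]
    simp only [Matrix.transpose_apply, Matrix.mul_apply, hM, hG, Matrix.of_apply]
    rw [← expand n i j, key_s8 n i j, Matrix.diagonal_apply]
  -- det M = 1
  have hMdet : M.det = 1 := by
    rw [Matrix.det_of_lowerTriangular M (fun i j hij => ?_)]
    · refine Finset.prod_eq_one fun i _ => ?_
      have := (pp_monic (i:ℕ)).1
      simp only [hM, Matrix.of_apply, Matrix.diag_apply]
      have h3 := (pp_monic (i:ℕ)).1.coeff_natDegree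
      rwa [(pp_monic (i:ℕ)).2] at h3
    · simp only [hM, Matrix.of_apply]
      apply Polynomial.coeff_eq_zero_of_natDegree_lt
      rw [(pp_monic (i:ℕ)).2]
      exact hij
  -- det G = 2^(n-1)
  have hGdet : G.det = 2 ^ (n - 1) := by
    have h1 : (M * G * M.transpose).det = G.det := by
      rw [Matrix.det_mul, Matrix.det_mul, Matrix.det_transpose, hMdet]
      ring
    rw [← h1, hMGM, Matrix.det_diagonal]
    obtain ⟨m, rfl⟩ : ∃ m, n = m + 1 := ⟨n - 1, by omega⟩
    rw [Fin.prod_univ_succ]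
    simp only [Fin.val_zero, if_pos rfl, one_mul, Fin.val_succ, Nat.succ_ne_zero,
      Nat.add_one_sub_one]
    simp [Finset.prod_const]
  -- det A
  have hAdet : A.det * A.det = a ^ (n * (n - 1)) := by
    rw [hA, Matrix.det_diagonal, Finset.prod_pow_eq_pow_sum, ← pow_add]
    congr 1
    have := Finset.sum_range_id_mul_two n
    rw [Fin.sum_univ_eq_sum_range (fun i => i) n]
    omega
  rw [hH, Matrix.det_mul, Matrix.det_mul, hGdet, ← hAdet]
  ring
end

section
/- Let a(z) = 1/z + ∑_{n=0}^{∞} a_n z^n be a symbol (absolutely convergent on an appropriate annulus) such that all eigenvalues of T_n(a) are real for every n ≥ 1. Then a_n ∈ ℝ for all n ≥ 0. -/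
/-- The Hessenberg Toeplitz matrix. -/
def hessT (a : ℕ → ℂ) (n : ℕ) : Matrix (Fin n) (Fin n) ℂ :=
  Matrix.of fun i j : Fin n =>
    if (i : ℤ) = (j : ℤ) + 1 then (1 : ℂ)
    else if (i : ℕ) ≤ (j : ℕ) then a ((j : ℕ) - (i : ℕ)) else 0

lemma hessT_apply (a : ℕ → ℂ) (n : ℕ) (i j : Fin n) :
    hessT a n i j =
      if (i : ℕ) = (j : ℕ) + 1 then (1 : ℂ)
      else if (i : ℕ) ≤ (j : ℕ) then a ((j : ℕ) - (i : ℕ)) else 0 := by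
  have h : ((i : ℤ) = (j : ℤ) + 1) ↔ ((i : ℕ) = (j : ℕ) + 1) := by omega
  simp only [hessT, Matrix.of_apply, h]

lemma hessT_succ_succ (a : ℕ → ℂ) (m : ℕ) (i k : Fin m) :
    hessT a (m + 1) i.succ k.succ = hessT a m i k := by
  rw [hessT_apply, hessT_apply, Fin.val_succ, Fin.val_succ]
  have h1 : ((i : ℕ) + 1 = (k : ℕ) + 1 + 1) ↔ ((i : ℕ) = (k : ℕ) + 1) := by omega
  have h2 : ((i : ℕ) + 1 ≤ (k : ℕ) + 1) ↔ ((i : ℕ) ≤ (k : ℕ)) := by omega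
  have h3 : (k : ℕ) + 1 - ((i : ℕ) + 1) = (k : ℕ) - (i : ℕ) := by omega
  simp only [h1, h2, h3]

lemma hessT_minor (a : ℕ → ℂ) :
    ∀ m : ℕ, ∀ j : Fin (m + 1),
      ((hessT a (m + 1)).submatrix Fin.succ j.succAbove).det
        = (hessT a (m - (j : ℕ))).det := by
  intro m
  induction m with
  | zero =>
    intro j
    have hj : j = 0 := Fin.fin_one_eq_zero j
    subst hj
    simp [Matrix.det_fin_zero]
  | succ m ih =>
    intro j
    refine Fin.cases ?_ (fun i => ?_) j
    · -- j = 0 : minor is hessT a (m+1)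
      have he : (hessT a (m + 2)).submatrix Fin.succ (Fin.succAbove 0)
          = hessT a (m + 1) := by
        ext p q
        rw [Fin.succAbove_zero, Matrix.submatrix_apply]
        exact hessT_succ_succ a (m + 1) p q
      rw [he]
      simp
      rfl
    · -- j = i.succ
      set M := (hessT a (m + 2)).submatrix Fin.succ (Fin.succAbove i.succ) with hM
      have hcol : ∀ p : Fin (m + 1), M p 0 = if p = 0 then 1 else 0 := by
        intro p
        have h0 : (Fin.succAbove i.succ) (0 : Fin (m + 1)) = 0 := by simp
        rw [hM, Matrix.submatrix_apply, h0, hessT_apply]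
        rcases eq_or_ne p (0 : Fin (m + 1)) with hp | hp
        · subst hp; simp
        · have hp' : (p : ℕ) ≠ 0 := by
            intro h; apply hp; ext; simp [h]
          have h1 : ¬ ((p.succ : ℕ) = (0 : Fin (m+2)) + 1) := by
            simp [Fin.val_succ]; omega
          have h2 : ¬ ((p.succ : ℕ) ≤ ((0 : Fin (m+2)) : ℕ)) := by
            simp [Fin.val_succ]
          rw [if_neg h1, if_neg h2, if_neg hp]
      -- expand along column 0
      have hexp : M.det = (M.submatrix Fin.succ Fin.succ).det := by
        rw [Matrix.det_succ_column_zero]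
        rw [Fintype.sum_eq_single (0 : Fin (m + 1))]
        · rw [hcol 0, if_pos rfl, Fin.succAbove_zero]
          simp
        · intro p hp
          rw [hcol p, if_neg hp]
          ring
      have hsub : M.submatrix Fin.succ Fin.succ
          = (hessT a (m + 1)).submatrix Fin.succ (Fin.succAbove i) := by
        ext p q
        simp only [hM, Matrix.submatrix_apply]
        rw [Fin.succ_succAbove_succ, hessT_succ_succ]
      rw [hexp, hsub]
      have hval : m + 1 - ((i.succ : Fin (m + 2)) : ℕ) = m - (i : ℕ) := by
        simp [Fin.val_succ]
      rw [hval]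
      exact ih i

lemma hessT_det_rec (a : ℕ → ℂ) (m : ℕ) :
    (hessT a (m + 1)).det
      = ∑ j : Fin (m + 1), (-1 : ℂ) ^ (j : ℕ) * a (j : ℕ)
          * (hessT a (m - (j : ℕ))).det := by
  rw [Matrix.det_succ_row_zero]
  refine Finset.sum_congr rfl fun j _ => ?_
  have h0 : hessT a (m + 1) 0 j = a (j : ℕ) := by
    rw [hessT_apply]
    simp
  rw [h0, hessT_minor a m j]

lemma root_mem_spectrum {n : ℕ} (M : Matrix (Fin n) (Fin n) ℂ) (μ : ℂ)
    (h : M.charpoly.IsRoot μ) : μ ∈ spectrum ℂ M := by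
  rw [spectrum.mem_iff]
  intro hu
  have hmat : (Matrix.charmatrix M).map (Polynomial.evalRingHom μ)
      = algebraMap ℂ (Matrix (Fin n) (Fin n) ℂ) μ - M := by
    ext i j
    simp only [Matrix.map_apply, Matrix.charmatrix_apply, Polynomial.coe_evalRingHom,
      Polynomial.eval_sub, Polynomial.eval_C, Matrix.sub_apply,
      Matrix.algebraMap_matrix_apply]
    rcases eq_or_ne i j with hij | hij
    · subst hij; simp
    · simp [Matrix.diagonal_apply_ne _ hij, hij]
  have hdet : (algebraMap ℂ (Matrix (Fin n) (Fin n) ℂ) μ - M).det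
      = Polynomial.eval μ M.charpoly := by
    rw [← hmat, Matrix.charpoly, ← RingHom.mapMatrix_apply, ← RingHom.map_det]
    rfl
  have hIU : IsUnit (algebraMap ℂ (Matrix (Fin n) (Fin n) ℂ) μ - M).det :=
    (Matrix.isUnit_iff_isUnit_det _).mp hu
  rw [hdet] at hIU
  exact hIU.ne_zero h

lemma real_mul_im {x y : ℂ} (hx : x.im = 0) (hy : y.im = 0) : (x * y).im = 0 := by
  simp [Complex.mul_im, hx, hy]

lemma neg_one_pow_im (n : ℕ) : ((-1 : ℂ) ^ n).im = 0 := by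
  have : ((-1 : ℂ) ^ n) = (((-1 : ℝ) ^ n : ℝ) : ℂ) := by push_cast; ring
  rw [this, Complex.ofReal_im]

/-- If a Hessenberg Toeplitz symbol `a(z) = 1/z + ∑ a_n z^n` (convergent on some annulus)
gives matrices `T_n(a)` with only real eigenvalues, then all coefficients `a_n` are real. -/
theorem stmt_14 (a : ℕ → ℂ)
    (hsum : ∃ R > (0 : ℝ), Summable fun n : ℕ => ‖a n‖ * R ^ n)
    (hreal : ∀ n : ℕ, 1 ≤ n → ∀ μ ∈ spectrum ℂ
        (Matrix.of fun i j : Fin n =>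
          if (i : ℤ) = (j : ℤ) + 1 then (1 : ℂ)
          else if (i : ℕ) ≤ (j : ℕ) then a ((j : ℕ) - (i : ℕ)) else 0),
      μ.im = 0) :
    ∀ n : ℕ, (a n).im = 0 := by
  have hreal' : ∀ n : ℕ, 1 ≤ n → ∀ μ ∈ spectrum ℂ (hessT a n), μ.im = 0 := hreal
  -- all determinants are real
  have hD : ∀ n : ℕ, ((hessT a n).det).im = 0 := by
    intro n
    rcases Nat.eq_zero_or_pos n with hn | hn
    · subst hn
      rw [Matrix.det_fin_zero]
      simp
    · have hdet : (hessT a n).det = ((hessT a n).charpoly.roots).prod :=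
        Matrix.det_eq_prod_roots_charpoly _
      have hconj : (starRingEnd ℂ) ((hessT a n).charpoly.roots).prod
          = ((hessT a n).charpoly.roots).prod := by
        rw [map_multiset_prod]
        have hmc : Multiset.map (⇑(starRingEnd ℂ)) ((hessT a n).charpoly.roots)
            = Multiset.map id ((hessT a n).charpoly.roots) := by
          refine Multiset.map_congr rfl fun μ hμ => ?_
          have hroot : (hessT a n).charpoly.IsRoot μ :=
            (Polynomial.mem_roots (Matrix.charpoly_monic _).ne_zero).mp hμ
          have : μ.im = 0 := hreal' n hn μ (root_mem_spectrum _ _ hroot)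
          exact Complex.conj_eq_iff_im.mpr this
        rw [hmc, Multiset.map_id]
      rw [hdet]
      exact Complex.conj_eq_iff_im.mp hconj
  intro n
  induction n using Nat.strong_induction_on with
  | _ n ih =>
    have hrec := hessT_det_rec a n
    have him := hD (n + 1)
    rw [hrec, Complex.im_sum, Fin.sum_univ_castSucc] at him
    have hzero : ∀ j : Fin n,
        ((-1 : ℂ) ^ ((j.castSucc : Fin (n+1)) : ℕ) * a ((j.castSucc : Fin (n+1)) : ℕ)
          * (hessT a (n - ((j.castSucc : Fin (n+1)) : ℕ))).det).im = 0 := by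
      intro j
      exact real_mul_im (real_mul_im (neg_one_pow_im _) (ih j (j.isLt))) (hD _)
    rw [Finset.sum_congr rfl (fun j _ => hzero j), Finset.sum_const_zero, zero_add] at him
    -- the last term
    have hlast : ((-1 : ℂ) ^ n * a n).im = 0 := by
      have h1 : ((Fin.last n : Fin (n+1)) : ℕ) = n := rfl
      have h2 : n - n = 0 := Nat.sub_self n
      rw [h1, h2] at him
      have h3 : (hessT a 0).det = 1 := Matrix.det_fin_zero
      rw [h3, mul_one] at him
      exact him
    have key : a n = (-1 : ℂ) ^ n * ((-1 : ℂ) ^ n * a n) := by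
      rw [← mul_assoc, ← pow_add]
      rw [Even.neg_one_pow ⟨n, rfl⟩, one_mul]
    rw [key]
    exact real_mul_im (neg_one_pow_im n) hlast
end

section
/- Fix integers r, s ≥ 1 and set ω = r/(r+s). Define γ(t) = (sin(ωt)/sin((1−ω)t)) e^{it} for t ∈ (−π, π) \ {0}, extended continuously with γ(0) = r/s. Then for b(z) = z^{-r}(1+z)^{r+s}, one has b(γ(t)) = sin^{r+s}(t) / ( sin^r(ωt) · sin^s((1−ω)t) ) for all t ∈ (−π, π) with t ≠ 0, which is real. In particular b(γ(t)) ∈ ℝ for all t. -/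
lemma stmt_18_key (a b : ℝ) :
    (Real.sin b : ℂ) + Real.sin a * Complex.exp (Complex.I * ((a : ℂ) + b)) =
      Real.sin (a + b) * Complex.exp (Complex.I * a) := by
  rw [show Complex.I * ((a : ℂ) + b) = (((a + b : ℝ)) : ℂ) * Complex.I by push_cast; ring,
      show Complex.I * (a : ℂ) = (a : ℂ) * Complex.I by ring,
      Complex.exp_mul_I, Complex.exp_mul_I, ← Complex.ofReal_cos, ← Complex.ofReal_sin,
      ← Complex.ofReal_cos, ← Complex.ofReal_sin]
  simp only [Complex.ext_iff, Complex.add_re, Complex.add_im, Complex.mul_re, Complex.mul_im,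
    Complex.ofReal_re, Complex.ofReal_im, Complex.I_re, Complex.I_im]
  constructor
  · simp only [Real.sin_add, Real.cos_add]
    linear_combination -Real.sin b * Real.sin_sq_add_cos_sq a
  · simp only [Real.sin_add, Real.cos_add]
    ring

/-- For `b(z) = z^{-r}(1+z)^{r+s}` and the curve
`γ(t) = (sin(ωt)/sin((1−ω)t)) e^{it}`, `ω = r/(r+s)`, `γ(0) = r/s`, one has
`b(γ(t)) = sin^{r+s}(t)/(sin^r(ωt) sin^s((1−ω)t))` for `t ∈ (−π,π) ∖ {0}`; in particular
`b(γ(t))` is real for all `t ∈ (−π,π)`. -/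
theorem stmt_18 (r s : ℕ) (hr : 1 ≤ r) (hs : 1 ≤ s) :
    let ω : ℝ := (r : ℝ) / ((r : ℝ) + s)
    let γ : ℝ → ℂ := fun t => if t = 0 then (((r : ℝ) / (s : ℝ) : ℝ) : ℂ)
      else ((Real.sin (ω * t) / Real.sin ((1 - ω) * t) : ℝ) : ℂ) *
        Complex.exp (Complex.I * t)
    (∀ t ∈ Set.Ioo (-Real.pi) Real.pi, t ≠ 0 →
      γ t ^ (-(r : ℤ)) * (1 + γ t) ^ (r + s) =
        ((Real.sin t ^ (r + s) /
          (Real.sin (ω * t) ^ r * Real.sin ((1 - ω) * t) ^ s) : ℝ) : ℂ)) ∧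
    (∀ t ∈ Set.Ioo (-Real.pi) Real.pi,
      (γ t ^ (-(r : ℤ)) * (1 + γ t) ^ (r + s)).im = 0) := by
  intro ω γ
  have hr' : (1 : ℝ) ≤ (r : ℝ) := by exact_mod_cast hr
  have hs' : (1 : ℝ) ≤ (s : ℝ) := by exact_mod_cast hs
  have hrs : (0 : ℝ) < (r : ℝ) + s := by linarith
  have hω0 : 0 < ω := by
    apply div_pos (by linarith) hrs
  have hω1 : ω < 1 := by
    rw [div_lt_one hrs]; linarith
  have hωrs : ((r : ℝ) + s) * ω = r := by
    simp only [ω]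
    field_simp
  have main : ∀ t ∈ Set.Ioo (-Real.pi) Real.pi, t ≠ 0 →
      γ t ^ (-(r : ℤ)) * (1 + γ t) ^ (r + s) =
        ((Real.sin t ^ (r + s) /
          (Real.sin (ω * t) ^ r * Real.sin ((1 - ω) * t) ^ s) : ℝ) : ℂ) := by
    intro t ht hne
    have htabs : |t| < Real.pi := abs_lt.mpr ⟨ht.1, ht.2⟩
    set a := ω * t with ha
    set b := (1 - ω) * t with hb
    have hab : a + b = t := by rw [ha, hb]; ring
    have hsin_ne : ∀ c : ℝ, 0 < c → c < 1 → Real.sin (c * t) ≠ 0 := by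
      intro c hc0 hc1 h
      have habs : |c * t| < Real.pi := by
        rw [abs_mul, abs_of_pos hc0]
        calc c * |t| ≤ 1 * |t| := by
              apply mul_le_mul_of_nonneg_right (le_of_lt hc1) (abs_nonneg t)
          _ = |t| := one_mul _
          _ < Real.pi := htabs
      have h0 : c * t = 0 :=
        (Real.sin_eq_zero_iff_of_lt_of_lt (abs_lt.mp habs).1 (abs_lt.mp habs).2).mp h
      exact hne (by rcases mul_eq_zero.mp h0 with h' | h' <;> [exact absurd h' hc0.ne'; exact h'])
    have hsa : Real.sin a ≠ 0 := hsin_ne ω hω0 hω1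
    have hsb : Real.sin b ≠ 0 := hsin_ne (1 - ω) (by linarith) (by linarith)
    have hsa' : (Real.sin a : ℂ) ≠ 0 := by exact_mod_cast hsa
    have hsb' : (Real.sin b : ℂ) ≠ 0 := by exact_mod_cast hsb
    have hγ : γ t = ((Real.sin a / Real.sin b : ℝ) : ℂ) * Complex.exp (Complex.I * t) := by
      simp only [γ, if_neg hne]
      rfl
    have key := stmt_18_key a b
    rw [hab] at key
    have hcast : (Complex.I * t) = Complex.I * ((a : ℂ) + b) := by
      rw [show ((a : ℂ) + b) = ((a + b : ℝ) : ℂ) by push_cast; ring, hab]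
    have hωrsC : ((r : ℂ) + s) * (ω : ℂ) = (r : ℂ) := by exact_mod_cast hωrs
    have h1γ : (1 : ℂ) + γ t =
        ((Real.sin t / Real.sin b : ℝ) : ℂ) * Complex.exp (Complex.I * a) := by
      rw [hγ, hcast, Complex.ofReal_div, Complex.ofReal_div, div_mul_eq_mul_div,
        div_mul_eq_mul_div, add_div' _ _ _ hsb', div_eq_div_iff hsb' hsb']
      linear_combination (Real.sin b : ℂ) * key
    have hexp : ((Complex.exp (Complex.I * t)) ^ r)⁻¹ * Complex.exp (Complex.I * a) ^ (r + s)
        = 1 := by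
      rw [← Complex.exp_nat_mul, ← Complex.exp_nat_mul, ← Complex.exp_neg, ← Complex.exp_add,
        ← Complex.exp_zero]
      congr 1
      have hac : (a : ℂ) = (ω : ℝ) * t := by rw [ha]; push_cast; ring
      rw [hac]
      push_cast
      linear_combination Complex.I * (t : ℂ) * hωrsC
    have hγne : γ t ≠ 0 := by
      rw [hγ]
      exact mul_ne_zero (by exact_mod_cast div_ne_zero hsa hsb) (Complex.exp_ne_zero _)
    rw [zpow_neg, zpow_natCast, h1γ, hγ, mul_pow, mul_pow, mul_inv]
    rw [show (((Real.sin a / Real.sin b : ℝ) : ℂ) ^ r)⁻¹ *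
        ((Complex.exp (Complex.I * t)) ^ r)⁻¹ *
        (((Real.sin t / Real.sin b : ℝ) : ℂ) ^ (r + s) *
          Complex.exp (Complex.I * a) ^ (r + s)) =
        (((Real.sin a / Real.sin b : ℝ) : ℂ) ^ r)⁻¹ *
          ((Real.sin t / Real.sin b : ℝ) : ℂ) ^ (r + s) *
          (((Complex.exp (Complex.I * t)) ^ r)⁻¹ *
            Complex.exp (Complex.I * a) ^ (r + s)) by ring, hexp, mul_one]
    rw [← Complex.ofReal_pow, ← Complex.ofReal_inv, ← Complex.ofReal_pow,
      ← Complex.ofReal_mul]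
    congr 1
    field_simp
    rw [div_pow, div_pow]
    simp only [div_mul_eq_mul_div]
    rw [div_eq_div_iff (pow_ne_zero _ hsb) (pow_ne_zero _ hsb)]
    ring
  refine ⟨main, ?_⟩
  intro t ht
  by_cases hne : t = 0
  · subst hne
    simp only [γ, if_pos rfl]
    rw [show (1 : ℂ) + (((r : ℝ) / (s : ℝ) : ℝ) : ℂ) = (((1 + (r : ℝ) / s : ℝ)) : ℂ) by
      push_cast; ring, ← Complex.ofReal_zpow, ← Complex.ofReal_pow, ← Complex.ofReal_mul]
    exact Complex.ofReal_im _
  · rw [main t ht hne]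
    exact Complex.ofReal_im _
end

section
/- Let b(z) = z^{-r}(1+z)^{r+s} with r, s ≥ 1, and let γ be the Jordan curve γ(t) = (sin(rt/(r+s))/sin(st/(r+s))) e^{it}. Then b∘γ is strictly decreasing on (0, π), with b(γ(0⁺)) = (r+s)^{r+s}/(r^r s^s) and b(γ(π)) = 0; moreover the derivative of b satisfies b'(z) = ((s z − r)/((1+z) z)) b(z) for z ∉ {0, −1}, so b'(γ(t)) ≠ 0 for all t ∈ (0, π). -/
open Real Set

private lemma sinc_lemma19 {x y : ℝ} (hx : 0 < x) (hxy : x < y) (hy : y ≤ π) :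
    x * Real.sin y < y * Real.sin x := by
  have hy0 : 0 < y := hx.trans hxy
  have h := strictConcaveOn_sin_Icc.2 (x := 0) (y := y)
    ⟨le_refl 0, Real.pi_pos.le⟩ ⟨hy0.le, hy⟩ hy0.ne
    (show (0:ℝ) < 1 - x/y by rw [sub_pos]; exact (div_lt_one hy0).mpr hxy)
    (show (0:ℝ) < x/y by positivity) (by ring)
  simp only [smul_eq_mul, mul_zero, Real.sin_zero, zero_add, zero_mul] at h
  rw [div_mul_cancel₀ _ hy0.ne'] at h
  have h2 : y * (x / y * Real.sin y) < y * Real.sin x :=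
    (mul_lt_mul_iff_right₀ hy0).mpr h
  rw [← mul_assoc, mul_div_cancel₀ _ hy0.ne'] at h2
  exact h2

private lemma num_pos19 {c t : ℝ} (hc0 : 0 < c) (hc1 : c < 1) (ht0 : 0 < t) (htpi : t < π) :
    0 < c * Real.cos (c*t) * Real.sin t - Real.sin (c*t) * Real.cos t := by
  have key : c * Real.cos (c*t) * Real.sin t - Real.sin (c*t) * Real.cos t
      = ((c-1) * Real.sin ((1+c)*t) + (c+1) * Real.sin ((1-c)*t))/2 := by
    have e1 : (1+c)*t = t + c*t := by ring
    have e2 : (1-c)*t = t - c*t := by ring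
    rw [e1, e2, Real.sin_add, Real.sin_sub]; ring
  rw [key]
  have h1 : 0 < (1-c)*t := mul_pos (by linarith) ht0
  have h1' : (1-c)*t < π := by nlinarith
  have hlt : (1-c)*t < (1+c)*t := by nlinarith
  by_cases hb : (1+c)*t ≤ π
  · have h := sinc_lemma19 h1 hlt hb
    nlinarith [h]
  · push_neg at hb
    have hpos : 0 < Real.sin ((1-c)*t) := Real.sin_pos_of_pos_of_lt_pi h1 h1'
    have hsin : Real.sin ((1+c)*t) ≤ 0 := by
      have e : Real.sin ((1+c)*t - π) = - Real.sin ((1+c)*t) := Real.sin_sub_pi _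
      have : 0 ≤ Real.sin ((1+c)*t - π) :=
        Real.sin_nonneg_of_nonneg_of_le_pi (by linarith) (by nlinarith)
      linarith
    nlinarith

private lemma g_hasDeriv19 (c : ℝ) {t : ℝ} (hsin : Real.sin t ≠ 0) :
    HasDerivAt (fun u => Real.sin (c*u)/Real.sin u)
      ((c * Real.cos (c*t) * Real.sin t - Real.sin (c*t) * Real.cos t)/(Real.sin t)^2) t := by
  have hc : HasDerivAt (fun u : ℝ => c*u) c t := by
    simpa using (hasDerivAt_id t).const_mul c
  have h1 : HasDerivAt (fun u => Real.sin (c*u)) (Real.cos (c*t) * c) t :=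
    (Real.hasDerivAt_sin (c*t)).comp t hc
  have h2 := Real.hasDerivAt_sin t
  have := h1.div h2 hsin
  exact this.congr_deriv (by ring)

private lemma g_mono19 {c : ℝ} (hc0 : 0 < c) (hc1 : c < 1) :
    StrictMonoOn (fun t => Real.sin (c*t)/Real.sin t) (Ioo 0 π) := by
  have hne : ∀ t ∈ Ioo (0:ℝ) π, Real.sin t ≠ 0 := fun t ht =>
    (Real.sin_pos_of_pos_of_lt_pi ht.1 ht.2).ne'
  apply strictMonoOn_of_deriv_pos (convex_Ioo 0 π)
  · exact fun t ht => ((g_hasDeriv19 c (hne t ht)).continuousAt).continuousWithinAt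
  · intro t ht
    rw [interior_Ioo] at ht
    rw [(g_hasDeriv19 c (hne t ht)).deriv]
    exact div_pos (num_pos19 hc0 hc1 ht.1 ht.2)
      (pow_pos (Real.sin_pos_of_pos_of_lt_pi ht.1 ht.2) 2)

private lemma f_anti19 {r s : ℕ} (hr : 1 ≤ r) (hs : 1 ≤ s) {c : ℝ} (hc0 : 0 < c) (hc1 : c < 1) :
    StrictAntiOn (fun t => (Real.sin t/Real.sin (c*t))^r * (Real.sin t/Real.sin ((1-c)*t))^s)
      (Ioo 0 π) := by
  have hc0' : 0 < 1 - c := by linarith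
  have hc1' : 1 - c < 1 := by linarith
  intro t1 ht1 t2 ht2 hlt
  have sp : ∀ t ∈ Ioo (0:ℝ) π, 0 < Real.sin t := fun t ht =>
    Real.sin_pos_of_pos_of_lt_pi ht.1 ht.2
  have mem : ∀ (d : ℝ), 0 < d → d < 1 → ∀ t ∈ Ioo (0:ℝ) π, 0 < Real.sin (d*t) := by
    intro d hd0 hd1 t ht
    exact Real.sin_pos_of_pos_of_lt_pi (mul_pos hd0 ht.1)
      (by nlinarith [ht.1, ht.2, Real.pi_pos])
  have key : ∀ (d : ℝ), 0 < d → d < 1 →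
      Real.sin t2 / Real.sin (d*t2) < Real.sin t1 / Real.sin (d*t1) := by
    intro d hd0 hd1
    have h := g_mono19 hd0 hd1 ht1 ht2 hlt
    have p1 := sp t1 ht1; have p2 := sp t2 ht2
    have q1 := mem d hd0 hd1 t1 ht1; have q2 := mem d hd0 hd1 t2 ht2
    rw [div_lt_div_iff₀ p1 p2] at h
    rw [div_lt_div_iff₀ q2 q1]
    nlinarith
  have k1 := key c hc0 hc1
  have k2 := key (1-c) hc0' hc1'
  have pos1 : 0 < Real.sin t2 / Real.sin (c*t2) :=
    div_pos (sp t2 ht2) (mem c hc0 hc1 t2 ht2)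
  have pos2 : 0 < Real.sin t2 / Real.sin ((1-c)*t2) :=
    div_pos (sp t2 ht2) (mem (1-c) hc0' hc1' t2 ht2)
  exact mul_lt_mul'' (pow_lt_pow_left₀ k1 pos1.le (by omega))
    (pow_lt_pow_left₀ k2 pos2.le (by omega)) (by positivity) (by positivity)

private lemma exp_identity19 (om t : ℝ) :
    ((Real.sin ((1-om)*t) : ℂ)) + (Real.sin (om*t) : ℂ) * Complex.exp (Complex.I * t)
      = (Real.sin t : ℂ) * Complex.exp (Complex.I * ((om : ℝ)*t : ℝ)) := by
  rw [mul_comm Complex.I, mul_comm Complex.I]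
  rw [Complex.exp_mul_I, Complex.exp_mul_I]
  rw [← Complex.ofReal_cos, ← Complex.ofReal_sin, ← Complex.ofReal_cos, ← Complex.ofReal_sin]
  apply Complex.ext
  · simp only [Complex.add_re, Complex.ofReal_re, Complex.mul_re, Complex.add_im,
      Complex.mul_im, Complex.ofReal_im, Complex.I_re, Complex.I_im]
    have : (1-om)*t = t - om*t := by ring
    rw [this, Real.sin_sub]
    ring
  · simp only [Complex.add_re, Complex.ofReal_re, Complex.mul_re, Complex.add_im,
      Complex.mul_im, Complex.ofReal_im, Complex.I_re, Complex.I_im]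
    ring

private lemma one_add_gamma19 {om t : ℝ} (hbb : Real.sin ((1-om)*t) ≠ 0) :
    1 + ((Real.sin (om*t) / Real.sin ((1-om)*t) : ℝ) : ℂ) * Complex.exp (Complex.I * t)
      = ((Real.sin t / Real.sin ((1-om)*t) : ℝ) : ℂ) * Complex.exp (Complex.I * ((om*t : ℝ))) := by
  have hbbC : ((Real.sin ((1-om)*t) : ℝ) : ℂ) ≠ 0 := Complex.ofReal_ne_zero.mpr hbb
  rw [Complex.ofReal_div, Complex.ofReal_div, div_mul_eq_mul_div,
    add_div' _ _ _ hbbC, one_mul]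
  rw [div_mul_eq_mul_div]
  congr 1
  exact exp_identity19 om t

private lemma bgamma19 (r s : ℕ) (hr : 1 ≤ r) (hs : 1 ≤ s) {t : ℝ} (ht : t ∈ Ioo 0 π) :
    (((Real.sin (((r:ℝ)/((r:ℝ)+s))*t) / Real.sin ((1-(r:ℝ)/((r:ℝ)+s))*t) : ℝ) : ℂ) *
        Complex.exp (Complex.I * t)) ^ (-(r:ℤ)) *
      (1 + ((Real.sin (((r:ℝ)/((r:ℝ)+s))*t) / Real.sin ((1-(r:ℝ)/((r:ℝ)+s))*t) : ℝ) : ℂ) *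
        Complex.exp (Complex.I * t)) ^ (r+s)
    = (((Real.sin t / Real.sin (((r:ℝ)/((r:ℝ)+s))*t))^r *
        (Real.sin t / Real.sin ((1-(r:ℝ)/((r:ℝ)+s))*t))^s : ℝ) : ℂ) := by
  set om : ℝ := (r:ℝ)/((r:ℝ)+s) with hom
  have hrs : (0:ℝ) < (r:ℝ) + s := by positivity
  have hom0 : 0 < om := by positivity
  have hom1 : om < 1 := by
    rw [hom, div_lt_one hrs]
    have hs' : (0:ℝ) < s := by exact_mod_cast Nat.lt_of_lt_of_le Nat.zero_lt_one hs
    linarith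
  have h1m : 0 < 1 - om := by linarith
  have pa : 0 < Real.sin (om*t) :=
    Real.sin_pos_of_pos_of_lt_pi (mul_pos hom0 ht.1) (by nlinarith [ht.1, ht.2, Real.pi_pos])
  have pb : 0 < Real.sin ((1-om)*t) :=
    Real.sin_pos_of_pos_of_lt_pi (mul_pos h1m ht.1) (by nlinarith [ht.1, ht.2, Real.pi_pos])
  have pst : 0 < Real.sin t := Real.sin_pos_of_pos_of_lt_pi ht.1 ht.2
  set a := Real.sin (om*t)
  set bb := Real.sin ((1-om)*t)
  set st := Real.sin t
  rw [one_add_gamma19 pb.ne']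
  rw [mul_zpow, mul_pow]
  have e1 : (Complex.exp (Complex.I * t)) ^ (-(r:ℤ))
      = Complex.exp ((-(r:ℕ) : ℂ) * (Complex.I * t)) := by
    rw [← Complex.exp_int_mul]
    congr 1
    push_cast
    ring
  rw [e1]
  rw [show (Complex.exp (Complex.I * ((om*t : ℝ)))) ^ (r+s)
      = Complex.exp (((r+s : ℕ) : ℂ) * (Complex.I * ((om*t : ℝ)))) from
      (Complex.exp_nat_mul _ _).symm]
  have hrsC : ((r:ℂ) + s) ≠ 0 := by
    have h0 : (((r:ℝ) + s : ℝ) : ℂ) ≠ 0 := Complex.ofReal_ne_zero.mpr hrs.ne'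
    push_cast at h0
    exact h0
  have hexp : Complex.exp ((-(r:ℕ) : ℂ) * (Complex.I * t)) *
      Complex.exp (((r+s : ℕ) : ℂ) * (Complex.I * ((om*t : ℝ)))) = 1 := by
    rw [← Complex.exp_add, ← Complex.exp_zero]
    congr 1
    have homC : ((om : ℝ) : ℂ) * ((r:ℂ) + s) = (r:ℂ) := by
      rw [hom]
      push_cast
      rw [div_mul_cancel₀ _ hrsC]
    push_cast
    linear_combination (Complex.I * (t:ℂ)) * homC
  rw [show ∀ (x y z w : ℂ), x * y * (z * w) = (x * z) * (y * w) from fun x y z w => by ring]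
  rw [hexp, mul_one]
  rw [← Complex.ofReal_zpow, ← Complex.ofReal_pow, ← Complex.ofReal_mul]
  congr 1
  rw [zpow_neg, zpow_natCast]
  have ha0 := pa.ne'
  have hb0 := pb.ne'
  field_simp
  have hab : a / bb * (st / a) = st / bb := by
    rw [div_mul_div_comm, mul_comm a st, mul_div_mul_right _ _ ha0]
  change (st / bb) ^ (r+s) = _
  rw [pow_add, ← mul_pow, hab]

private lemma deriv_b19 (r s : ℕ) (hr : 1 ≤ r) {z : ℂ} (hz : z ≠ 0) (hz1 : z ≠ -1) :
    deriv (fun z : ℂ => z ^ (-(r:ℤ)) * (1 + z) ^ (r + s)) z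
      = (((s:ℂ)*z - r)/((1+z)*z)) * (z ^ (-(r:ℤ)) * (1+z)^(r+s)) := by
  have h1z : (1:ℂ) + z ≠ 0 := by
    intro h
    exact hz1 (by linear_combination h)
  have h1 := hasDerivAt_zpow (-(r:ℤ)) z (Or.inl hz)
  have h2 : HasDerivAt (fun z : ℂ => (1 + z) ^ (r+s)) (((r+s:ℕ):ℂ) * (1+z)^(r+s-1)) z := by
    have := (hasDerivAt_pow (r+s) (1+z)).comp z ((hasDerivAt_id z).const_add 1)
    simpa [Function.comp_def] using this
  rw [show deriv (fun z : ℂ => z ^ (-(r:ℤ)) * (1 + z) ^ (r + s)) z = _ from (h1.mul h2).deriv]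
  have e1 : z ^ (-(r:ℤ) - 1) = z ^ (-(r:ℤ)) * z⁻¹ := zpow_sub_one₀ hz _
  have e2 : (1+z)^(r+s) = (1+z)^(r+s-1) * (1+z) := by
    rw [← pow_succ]
    congr 1
    omega
  rw [e1, e2]
  have hzr : z ^ (-(r:ℤ)) ≠ 0 := zpow_ne_zero _ hz
  have hpw : (1+z)^(r+s-1) ≠ 0 := pow_ne_zero _ h1z
  field_simp
  push_cast
  ring

/-- For `b(z) = z^{-r}(1+z)^{r+s}` and the Jordan curve `γ`, the function `b∘γ` is strictly
decreasing on `(0,π)`, with `b(γ(0)) = (r+s)^{r+s}/(r^r s^s)` and `b(γ(π)) = 0`; moreover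
`b'(z) = ((sz − r)/((1+z)z)) b(z)` away from `0, −1`, so `b'(γ(t)) ≠ 0` on `(0,π)`. -/
theorem stmt_19 (r s : ℕ) (hr : 1 ≤ r) (hs : 1 ≤ s) :
    let ω : ℝ := (r : ℝ) / ((r : ℝ) + s)
    let γ : ℝ → ℂ := fun t => if t = 0 then (((r : ℝ) / (s : ℝ) : ℝ) : ℂ)
      else ((Real.sin (ω * t) / Real.sin ((1 - ω) * t) : ℝ) : ℂ) *
        Complex.exp (Complex.I * t)
    let b : ℂ → ℂ := fun z => z ^ (-(r : ℤ)) * (1 + z) ^ (r + s)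
    StrictAntiOn (fun t => (b (γ t)).re) (Set.Ioo 0 Real.pi) ∧
    b (γ 0) = ((((r : ℝ) + s) ^ (r + s) / ((r : ℝ) ^ r * (s : ℝ) ^ s) : ℝ) : ℂ) ∧
    b (γ Real.pi) = 0 ∧
    (∀ z : ℂ, z ≠ 0 → z ≠ -1 →
      deriv b z = (((s : ℂ) * z - (r : ℂ)) / ((1 + z) * z)) * b z) ∧
    (∀ t ∈ Set.Ioo (0 : ℝ) Real.pi, deriv b (γ t) ≠ 0) := by
  intro ω γ b
  have hrR : (0:ℝ) < r := by exact_mod_cast Nat.lt_of_lt_of_le Nat.zero_lt_one hr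
  have hsR : (0:ℝ) < s := by exact_mod_cast Nat.lt_of_lt_of_le Nat.zero_lt_one hs
  have hrs : (0:ℝ) < (r:ℝ) + s := by linarith
  have hom0 : 0 < ω := by positivity
  have hom1 : ω < 1 := by
    show (r:ℝ)/((r:ℝ)+s) < 1
    rw [div_lt_one hrs]; linarith
  have h1m : 0 < 1 - ω := by linarith
  -- b(γ t) is real for t ∈ (0,π)
  have hbg : ∀ t ∈ Ioo (0:ℝ) π, b (γ t)
      = (((Real.sin t / Real.sin (ω*t))^r * (Real.sin t / Real.sin ((1-ω)*t))^s : ℝ) : ℂ) := by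
    intro t ht
    have htne : t ≠ 0 := ht.1.ne'
    show (γ t) ^ (-(r:ℤ)) * (1 + γ t) ^ (r+s) = _
    have hγ : γ t = ((Real.sin (ω * t) / Real.sin ((1 - ω) * t) : ℝ) : ℂ) *
        Complex.exp (Complex.I * t) := if_neg htne
    rw [hγ]
    exact bgamma19 r s hr hs ht
  refine ⟨?_, ?_, ?_, ?_, ?_⟩
  · -- strict anti
    intro t1 ht1 t2 ht2 hlt
    show (b (γ t2)).re < (b (γ t1)).re
    rw [hbg t1 ht1, hbg t2 ht2, Complex.ofReal_re, Complex.ofReal_re]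
    exact f_anti19 hr hs hom0 hom1 ht1 ht2 hlt
  · -- value at 0
    show (γ 0) ^ (-(r:ℤ)) * (1 + γ 0) ^ (r+s) = _
    have hγ0 : γ 0 = (((r:ℝ)/(s:ℝ) : ℝ) : ℂ) := if_pos rfl
    rw [hγ0]
    have : (1 : ℂ) + (((r:ℝ)/(s:ℝ) : ℝ) : ℂ) = (((1 + (r:ℝ)/(s:ℝ) : ℝ)) : ℂ) := by
      push_cast; ring
    rw [this, ← Complex.ofReal_zpow, ← Complex.ofReal_pow, ← Complex.ofReal_mul]
    congr 1
    rw [zpow_neg, zpow_natCast]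
    rw [show (1 + (r:ℝ)/(s:ℝ)) = ((s:ℝ)+r)/s by field_simp]
    rw [div_pow, div_pow]
    rw [show ((s:ℝ)+r) = ((r:ℝ)+s) by ring]
    field_simp
    ring
  · -- value at π
    show (γ π) ^ (-(r:ℤ)) * (1 + γ π) ^ (r+s) = 0
    have hπ : γ π = ((Real.sin (ω * π) / Real.sin ((1 - ω) * π) : ℝ) : ℂ) *
        Complex.exp (Complex.I * π) := if_neg Real.pi_ne_zero
    have hsin : Real.sin ((1-ω)*π) = Real.sin (ω*π) := by
      rw [show (1-ω)*π = π - ω*π by ring, Real.sin_pi_sub]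
    have hsp : 0 < Real.sin (ω*π) :=
      Real.sin_pos_of_pos_of_lt_pi (mul_pos hom0 Real.pi_pos)
        (by nlinarith [Real.pi_pos])
    have hexp : Complex.exp (Complex.I * π) = -1 := by
      rw [mul_comm]; exact Complex.exp_pi_mul_I
    have hγπ : γ π = -1 := by
      rw [hπ, hsin, div_self hsp.ne', Complex.ofReal_one, one_mul, hexp]
    rw [hγπ]
    have : (1 : ℂ) + (-1) = 0 := by ring
    rw [this, zero_pow (by omega : r + s ≠ 0), mul_zero]
  · -- derivative formula
    intro z hz hz1
    exact deriv_b19 r s hr hz hz1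
  · -- derivative nonzero on curve
    intro t ht
    have htne : t ≠ 0 := ht.1.ne'
    have hγ : γ t = ((Real.sin (ω * t) / Real.sin ((1 - ω) * t) : ℝ) : ℂ) *
        Complex.exp (Complex.I * t) := if_neg htne
    have pa : 0 < Real.sin (ω*t) :=
      Real.sin_pos_of_pos_of_lt_pi (mul_pos hom0 ht.1)
        (by nlinarith [ht.1, ht.2, Real.pi_pos])
    have pb : 0 < Real.sin ((1-ω)*t) :=
      Real.sin_pos_of_pos_of_lt_pi (mul_pos h1m ht.1)
        (by nlinarith [ht.1, ht.2, Real.pi_pos])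
    have pst : 0 < Real.sin t := Real.sin_pos_of_pos_of_lt_pi ht.1 ht.2
    have hρ : (0:ℝ) < Real.sin (ω*t) / Real.sin ((1-ω)*t) := div_pos pa pb
    have hz : γ t ≠ 0 := by
      rw [hγ]
      exact mul_ne_zero (Complex.ofReal_ne_zero.mpr hρ.ne') (Complex.exp_ne_zero _)
    have h1z : (1:ℂ) + γ t ≠ 0 := by
      rw [hγ, one_add_gamma19 pb.ne']
      exact mul_ne_zero (Complex.ofReal_ne_zero.mpr (div_pos pst pb).ne')
        (Complex.exp_ne_zero _)
    have hz1 : γ t ≠ -1 := by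
      intro h
      apply h1z
      rw [h]; ring
    have him : (γ t).im = (Real.sin (ω*t) / Real.sin ((1-ω)*t)) * Real.sin t := by
      rw [hγ, mul_comm Complex.I, Complex.im_ofReal_mul, Complex.exp_ofReal_mul_I_im]
    have hnum : (s:ℂ) * γ t - r ≠ 0 := by
      intro h
      have := congrArg Complex.im h
      simp only [Complex.sub_im, Complex.mul_im, Complex.natCast_im, Complex.natCast_re,
        Complex.zero_im, zero_mul, add_zero, mul_zero, sub_zero] at this
      rw [him] at this
      nlinarith [mul_pos hρ pst]
    rw [deriv_b19 r s hr hz hz1]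
    exact mul_ne_zero (div_ne_zero hnum (mul_ne_zero h1z hz))
      (mul_ne_zero (zpow_ne_zero _ hz) (pow_ne_zero _ h1z))
end
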